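/- arXiv:1611.04634 — 3 statements merged into one kernel-verified Lean document; each statement's English description precedes it below -/
import Mathlib

section
/- For any flow M ∈ Γ(P,Q) on a tree T and any edge e, ∑_{i∈T_e}∑_{j∈T'_e} (M_{i,j} − M_{j,i}) = ∑_{i∈T_e} (P_i − Q_i). In particular, the differential abundance value DiffAbund(e) = l(e)·∑_{i∈T_e}∑_{j∈T'_e} (M_{i,j} − M_{j,i}) is independent of the choice of flow M. -/
open scoped Classical BigOperators

noncomputable section

/-- `P` is a probability distribution on the finite vertex set `V`. -/
def IsProb {V : Type*} [Fintype V] (P : V → ℝ) : Prop :=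
  (∀ i, 0 ≤ P i) ∧ ∑ i, P i = 1

/-- `M` is a flow from `P` to `Q`: a nonnegative matrix whose row sums are `P`
and whose column sums are `Q`. -/
def IsFlow {V : Type*} [Fintype V] (P Q : V → ℝ) (M : V → V → ℝ) : Prop :=
  (∀ i j, 0 ≤ M i j) ∧ (∀ i, ∑ j, M i j = P i) ∧ (∀ j, ∑ i, M i j = Q j)

/-- The unique path between two vertices of a tree. -/
def treePath {V : Type*} (G : SimpleGraph V) (hG : G.IsTree) (i j : V) : G.Walk i j :=
  (hG.existsUnique_path i j).choose

/-- The path-length distance `D i j` in the tree `G` with edge lengths `l`. -/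
def treeDist {V : Type*} (G : SimpleGraph V) (hG : G.IsTree) (l : Sym2 V → ℝ) (i j : V) : ℝ :=
  ((treePath G hG i j).edges.map l).sum

/-- `T_e`: the component of `G` minus the edge `e` containing the root `r`. -/
def sideRoot {V : Type*} [Fintype V] (G : SimpleGraph V) (e : Sym2 V) (r : V) : Finset V :=
  Finset.univ.filter fun v => (G.deleteEdges {e}).Reachable r v

/-- The edge set of `G` as a finset of `Sym2 V`. -/
def edgeFinset' {V : Type*} [Fintype V] (G : SimpleGraph V) : Finset (Sym2 V) :=
  Finset.univ.filter fun e => e ∈ G.edgeSet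

/-- The transport cost of the matrix `M` with respect to the tree distance. -/
def cost {V : Type*} [Fintype V] (G : SimpleGraph V) (hG : G.IsTree) (l : Sym2 V → ℝ)
    (M : V → V → ℝ) : ℝ :=
  ∑ i, ∑ j, treeDist G hG l i j * M i j

/-- The earth mover's distance between `P` and `Q` on the tree `G`. -/
def EMD {V : Type*} [Fintype V] (G : SimpleGraph V) (hG : G.IsTree) (l : Sym2 V → ℝ)
    (P Q : V → ℝ) : ℝ :=
  sInf {c | ∃ M, IsFlow P Q M ∧ c = cost G hG l M}



lemma key_flow_sum {V : Type*} [Fintype V] (P Q : V → ℝ) (M : V → V → ℝ)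
    (hrow : ∀ i, ∑ j, M i j = P i) (hcol : ∀ j, ∑ i, M i j = Q j) (S : Finset V) :
    ∑ i ∈ S, ∑ j ∈ Sᶜ, (M i j - M j i) = ∑ i ∈ S, (P i - Q i) := by
  have h1 : ∀ i, ∑ j ∈ Sᶜ, M i j = P i - ∑ j ∈ S, M i j := by
    intro i
    have := Finset.sum_add_sum_compl S (fun j => M i j)
    rw [hrow i] at this; linarith
  have h2 : ∀ i, ∑ j ∈ Sᶜ, M j i = Q i - ∑ j ∈ S, M j i := by
    intro i
    have := Finset.sum_add_sum_compl S (fun j => M j i)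
    rw [hcol i] at this; linarith
  have hswap : ∑ i ∈ S, ∑ j ∈ S, M i j = ∑ i ∈ S, ∑ j ∈ S, M j i :=
    Finset.sum_comm
  simp only [Finset.sum_sub_distrib, h1, h2]
  linarith

/-- For any flow `M` and any edge `e`,
`∑_{i ∈ T_e} ∑_{j ∈ T'_e} (M i j - M j i) = ∑_{i ∈ T_e} (P i - Q i)`;
in particular `DiffAbund e = l e * ∑_{i ∈ T_e} ∑_{j ∈ T'_e} (M i j - M j i)` does not
depend on the choice of the flow `M`. -/
theorem stmt3 {V : Type*} [Fintype V] (G : SimpleGraph V) (hG : G.IsTree)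
    (l : Sym2 V → ℝ) (hl : ∀ e, 0 ≤ l e) (r : V)
    (P Q : V → ℝ) (hP : IsProb P) (hQ : IsProb Q) (e : Sym2 V) (he : e ∈ G.edgeSet) :
    (∀ M : V → V → ℝ, IsFlow P Q M →
      ∑ i ∈ sideRoot G e r, ∑ j ∈ (sideRoot G e r)ᶜ, (M i j - M j i) =
        ∑ i ∈ sideRoot G e r, (P i - Q i)) ∧
    (∀ M M' : V → V → ℝ, IsFlow P Q M → IsFlow P Q M' →
      l e * ∑ i ∈ sideRoot G e r, ∑ j ∈ (sideRoot G e r)ᶜ, (M i j - M j i) =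
        l e * ∑ i ∈ sideRoot G e r, ∑ j ∈ (sideRoot G e r)ᶜ, (M' i j - M' j i)) := by
  
  constructor
  · intro M hM
    exact key_flow_sum P Q M hM.2.1 hM.2.2 _
  · intro M M' hM hM'
    rw [key_flow_sum P Q M hM.2.1 hM.2.2, key_flow_sum P Q M' hM'.2.1 hM'.2.2]
end
end

section
/- There exists a flow M ∈ Γ(P,Q) on a tree T such that for every edge e, ∑_{i∈T_e}∑_{j∈T'_e} (M_{i,j} + M_{j,i}) = |∑_{i∈T_e} (P_i − Q_i)|; consequently EMD(P,Q) = ∑_{e∈E} l(e)·|∑_{i∈T_e} (P_i − Q_i)|. -/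
open scoped Classical BigOperators

noncomputable section

set_option linter.unusedSectionVars false

namespace Stmt6

open SimpleGraph Finset

variable {V : Type*} [Fintype V] {G : SimpleGraph V}

lemma treePath_isPath (hG : G.IsTree) (i j : V) : (treePath G hG i j).IsPath :=
  (hG.existsUnique_path i j).choose_spec.1

lemma treePath_unique (hG : G.IsTree) {i j : V} (p : G.Walk i j) (hp : p.IsPath) :
    p = treePath G hG i j :=
  (hG.existsUnique_path i j).choose_spec.2 p hp

lemma reachable_del_iff (hG : G.IsTree) {e : Sym2 V} {i j : V} :
    (G.deleteEdges {e}).Reachable i j ↔ e ∉ (treePath G hG i j).edges := by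
  constructor
  · rintro ⟨w⟩ hmem
    have hsub : ∀ f ∈ w.edges, f ∈ G.edgeSet := by
      intro f hf
      have := w.edges_subset_edgeSet hf
      rw [SimpleGraph.edgeSet_deleteEdges] at this
      exact this.1
    have hnotE : e ∉ w.edges := by
      intro hf
      have := w.edges_subset_edgeSet hf
      rw [SimpleGraph.edgeSet_deleteEdges] at this
      exact this.2 rfl
    have hpath := (w.transfer G hsub).bypass_isPath
    have heq := treePath_unique hG _ hpath
    rw [← heq] at hmem
    have := (w.transfer G hsub).edges_bypass_subset hmem
    rw [SimpleGraph.Walk.edges_transfer] at this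
    exact hnotE this
  · intro h
    exact ⟨(treePath G hG i j).toDeleteEdge e h⟩

lemma mem_sideRoot {e : Sym2 V} {r x : V} :
    x ∈ sideRoot G e r ↔ (G.deleteEdges {e}).Reachable r x := by
  simp [sideRoot]

lemma walk_step {u v : V} : ∀ {a b : V} (_ : G.Walk a b),
    ((G.deleteEdges {s(u,v)}).Reachable u a ∨ (G.deleteEdges {s(u,v)}).Reachable v a) →
    ((G.deleteEdges {s(u,v)}).Reachable u b ∨ (G.deleteEdges {s(u,v)}).Reachable v b) := by
  intro a b w
  induction w with
  | nil => exact id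
  | @cons x y z h q ih =>
    intro hyp
    apply ih
    by_cases hedge : s(x, y) = s(u, v)
    · rw [Sym2.eq_iff] at hedge
      rcases hedge with ⟨rfl, rfl⟩ | ⟨rfl, rfl⟩
      · exact Or.inr (SimpleGraph.Reachable.refl _)
      · exact Or.inl (SimpleGraph.Reachable.refl _)
    · have hadj : (G.deleteEdges {s(u,v)}).Adj x y := by
        rw [SimpleGraph.deleteEdges_adj]
        exact ⟨h, by simpa using hedge⟩
      rcases hyp with hy | hy
      · exact Or.inl (hy.trans hadj.reachable)
      · exact Or.inr (hy.trans hadj.reachable)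

lemma reach_or (hG : G.IsTree) {u v : V} (x : V) :
    (G.deleteEdges {s(u,v)}).Reachable u x ∨ (G.deleteEdges {s(u,v)}).Reachable v x := by
  obtain ⟨w⟩ := hG.isConnected.preconnected u x
  exact walk_step w (Or.inl (SimpleGraph.Reachable.refl _))

lemma not_reach_uv (hG : G.IsTree) {u v : V} (h : G.Adj u v) :
    ¬ (G.deleteEdges {s(u,v)}).Reachable u v := by
  intro hr
  rw [reachable_del_iff hG] at hr
  apply hr
  have heq := treePath_unique hG (SimpleGraph.Walk.cons h SimpleGraph.Walk.nil)
    (by simp [SimpleGraph.Walk.isPath_def, h.ne])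
  rw [← heq]
  simp

lemma del_two_classes (hG : G.IsTree) {e : Sym2 V} (he : e ∈ G.edgeSet) (x y z : V)
    (hy : ¬ (G.deleteEdges {e}).Reachable x y) (hz : ¬ (G.deleteEdges {e}).Reachable x z) :
    (G.deleteEdges {e}).Reachable y z := by
  induction e using Sym2.ind with
  | _ u v =>
    rw [SimpleGraph.mem_edgeSet] at he
    rcases reach_or hG (u := u) (v := v) x with hx | hx
    · rcases reach_or hG (u := u) (v := v) y with hy' | hy'
      · exact absurd (hx.symm.trans hy') hy
      · rcases reach_or hG (u := u) (v := v) z with hz' | hz'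
        · exact absurd (hx.symm.trans hz') hz
        · exact hy'.symm.trans hz'
    · rcases reach_or hG (u := u) (v := v) y with hy' | hy'
      · rcases reach_or hG (u := u) (v := v) z with hz' | hz'
        · exact hy'.symm.trans hz'
        · exact absurd (hx.symm.trans hz') hz
      · exact absurd (hx.symm.trans hy') hy

lemma sep_iff_side (hG : G.IsTree) {e : Sym2 V} (he : e ∈ G.edgeSet) (r i j : V) :
    (¬ (G.deleteEdges {e}).Reachable i j) ↔ ((i ∈ sideRoot G e r) ↔ (j ∉ sideRoot G e r)) := by
  induction e using Sym2.ind with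
  | _ u v =>
    rw [SimpleGraph.mem_edgeSet] at he
    have hnuv := not_reach_uv hG he
    have key : ∀ x y : V, (G.deleteEdges {s(u,v)}).Reachable x y ↔
        ((G.deleteEdges {s(u,v)}).Reachable u x ↔ (G.deleteEdges {s(u,v)}).Reachable u y) := by
      intro x y
      constructor
      · intro hxy
        exact ⟨fun h => h.trans hxy, fun h => h.trans hxy.symm⟩
      · intro hiff
        rcases reach_or hG (u := u) (v := v) x with hx | hx <;>
          rcases reach_or hG (u := u) (v := v) y with hy | hy
        · exact hx.symm.trans hy
        · exact absurd ((hiff.mp hx).trans hy.symm) hnuv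
        · exact absurd ((hiff.mpr hy).trans hx.symm) hnuv
        · exact hx.symm.trans hy
    rw [mem_sideRoot, mem_sideRoot, key i j, key r i, key r j]
    tauto

lemma edge_mem_path_iff (hG : G.IsTree) {e : Sym2 V} (he : e ∈ G.edgeSet) (r i j : V) :
    e ∈ (treePath G hG i j).edges ↔ ((i ∈ sideRoot G e r) ↔ (j ∉ sideRoot G e r)) := by
  rw [← sep_iff_side hG he r i j, reachable_del_iff hG, not_not]


lemma treeDist_eq (hG : G.IsTree) (l : Sym2 V → ℝ) (i j : V) :
    treeDist G hG l i j
      = ∑ e ∈ edgeFinset' G, if e ∈ (treePath G hG i j).edges then l e else 0 := by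
  rw [← Finset.sum_filter]
  have hfil : (edgeFinset' G).filter (fun e => e ∈ (treePath G hG i j).edges)
      = (treePath G hG i j).edges.toFinset := by
    ext f
    simp only [Finset.mem_filter, List.mem_toFinset, edgeFinset', Finset.mem_univ, true_and]
    exact ⟨fun h => h.2, fun h => ⟨(treePath G hG i j).edges_subset_edgeSet h, h⟩⟩
  rw [hfil, List.sum_toFinset _ (treePath_isPath hG i j).isTrail.edges_nodup]
  rfl

lemma cross_sum (S : Finset V) (N : V → V → ℝ) :
    (∑ i, ∑ j, if ((i ∈ S) ↔ (j ∉ S)) then N i j else 0)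
      = ∑ i ∈ S, ∑ j ∈ Sᶜ, (N i j + N j i) := by
  have h1 : ∀ i ∈ S, (∑ j, if ((i ∈ S) ↔ (j ∉ S)) then N i j else 0) = ∑ j ∈ Sᶜ, N i j := by
    intro i hi
    rw [← Finset.sum_filter]
    apply Finset.sum_congr _ (fun _ _ => rfl)
    ext j
    simp [hi]
  have h2 : ∀ i ∈ Sᶜ, (∑ j, if ((i ∈ S) ↔ (j ∉ S)) then N i j else 0) = ∑ j ∈ S, N i j := by
    intro i hi
    rw [Finset.mem_compl] at hi
    rw [← Finset.sum_filter]
    apply Finset.sum_congr _ (fun _ _ => rfl)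
    ext j
    simp [hi]
  rw [← Finset.sum_add_sum_compl S, Finset.sum_congr rfl h1, Finset.sum_congr rfl h2,
    show (∑ i ∈ Sᶜ, ∑ j ∈ S, N i j) = ∑ i ∈ S, ∑ j ∈ Sᶜ, N j i from Finset.sum_comm,
    ← Finset.sum_add_distrib]
  exact Finset.sum_congr rfl fun i _ => (Finset.sum_add_distrib).symm

lemma cost_eq (hG : G.IsTree) (l : Sym2 V → ℝ) (r : V) (M : V → V → ℝ) :
    cost G hG l M = ∑ e ∈ edgeFinset' G,
      l e * ∑ i ∈ sideRoot G e r, ∑ j ∈ (sideRoot G e r)ᶜ, (M i j + M j i) := by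
  unfold cost
  simp_rw [treeDist_eq hG l, Finset.sum_mul, ite_mul, zero_mul]
  rw [Finset.sum_congr rfl (fun i (_ : i ∈ Finset.univ) => Finset.sum_comm), Finset.sum_comm]
  apply Finset.sum_congr rfl
  intro e heE
  have he : e ∈ G.edgeSet := by simpa [edgeFinset'] using heE
  have hpt : ∀ i j : V, (if e ∈ (treePath G hG i j).edges then l e * M i j else 0)
      = l e * (if ((i ∈ sideRoot G e r) ↔ (j ∉ sideRoot G e r)) then M i j else 0) := by
    intro i j
    simp only [edge_mem_path_iff hG he r, mul_ite, mul_zero]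
  simp_rw [hpt, ← Finset.mul_sum]
  rw [cross_sum]

lemma flow_diff {P Q : V → ℝ} {M : V → V → ℝ} (hM : IsFlow P Q M) (S : Finset V) :
    (∑ i ∈ S, ∑ j ∈ Sᶜ, M i j) - (∑ i ∈ S, ∑ j ∈ Sᶜ, M j i) = ∑ i ∈ S, (P i - Q i) := by
  have hrow : ∑ i ∈ S, P i = ∑ i ∈ S, ∑ j ∈ S, M i j + ∑ i ∈ S, ∑ j ∈ Sᶜ, M i j := by
    rw [← Finset.sum_add_distrib]
    apply Finset.sum_congr rfl
    intro i _
    rw [Finset.sum_add_sum_compl, hM.2.1 i]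
  have hcol : ∑ i ∈ S, Q i = ∑ i ∈ S, ∑ j ∈ S, M j i + ∑ i ∈ S, ∑ j ∈ Sᶜ, M j i := by
    rw [← Finset.sum_add_distrib]
    apply Finset.sum_congr rfl
    intro i _
    rw [Finset.sum_add_sum_compl, hM.2.2 i]
  have hswap : ∑ i ∈ S, ∑ j ∈ S, M i j = ∑ i ∈ S, ∑ j ∈ S, M j i := Finset.sum_comm
  rw [Finset.sum_sub_distrib]
  linarith

lemma cross_lower {P Q : V → ℝ} {M : V → V → ℝ} (hM : IsFlow P Q M) (S : Finset V) :
    |∑ i ∈ S, (P i - Q i)| ≤ ∑ i ∈ S, ∑ j ∈ Sᶜ, (M i j + M j i) := by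
  have hA : 0 ≤ ∑ i ∈ S, ∑ j ∈ Sᶜ, M i j :=
    Finset.sum_nonneg fun i _ => Finset.sum_nonneg fun j _ => hM.1 i j
  have hB : 0 ≤ ∑ i ∈ S, ∑ j ∈ Sᶜ, M j i :=
    Finset.sum_nonneg fun i _ => Finset.sum_nonneg fun j _ => hM.1 j i
  have hsplit : ∑ i ∈ S, ∑ j ∈ Sᶜ, (M i j + M j i)
      = (∑ i ∈ S, ∑ j ∈ Sᶜ, M i j) + ∑ i ∈ S, ∑ j ∈ Sᶜ, M j i := by
    simp [Finset.sum_add_distrib]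
  rw [← flow_diff hM S, hsplit]
  calc |(∑ i ∈ S, ∑ j ∈ Sᶜ, M i j) - ∑ i ∈ S, ∑ j ∈ Sᶜ, M j i|
      ≤ |∑ i ∈ S, ∑ j ∈ Sᶜ, M i j| + |∑ i ∈ S, ∑ j ∈ Sᶜ, M j i| := abs_sub _ _
    _ = _ := by rw [abs_of_nonneg hA, abs_of_nonneg hB]


lemma support_reachable {H : SimpleGraph V} {a b z : V} (w : H.Walk a b)
    (hz : z ∈ w.support) : H.Reachable a z :=
  ⟨w.takeUntil z hz⟩

lemma endpoints_same_side (hG : G.IsTree) {e : Sym2 V} {u' v' : V} (h : G.Adj u' v')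
    (hne : e ≠ s(u', v')) (r : V) :
    (u' ∈ sideRoot G e r) ↔ (v' ∈ sideRoot G e r) := by
  have hreach : (G.deleteEdges {e}).Reachable u' v' := by
    rw [reachable_del_iff hG]
    have heq := treePath_unique hG (SimpleGraph.Walk.cons h SimpleGraph.Walk.nil)
      (by simp [SimpleGraph.Walk.isPath_def, h.ne])
    rw [← heq]
    simp [hne]
  rw [mem_sideRoot, mem_sideRoot]
  exact ⟨fun hr => hr.trans hreach, fun hr => hr.trans hreach.symm⟩

lemma laminar (hG : G.IsTree) {e e' : Sym2 V} (he : e ∈ G.edgeSet) (he' : e' ∈ G.edgeSet)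
    (hne : e ≠ e') (r : V) :
    sideRoot G e r ⊆ sideRoot G e' r ∨ sideRoot G e' r ⊆ sideRoot G e r ∨
      ∀ x, x ∈ sideRoot G e r ∨ x ∈ sideRoot G e' r := by
  induction e' using Sym2.ind with
  | _ u' v' =>
  rw [SimpleGraph.mem_edgeSet] at he'
  have hsame := endpoints_same_side hG he' hne r
  by_cases hu'S : u' ∈ sideRoot G e r
  · have hv'S : v' ∈ sideRoot G e r := hsame.mp hu'S
    -- any two vertices outside S are connected avoiding both e and e'
    have claim : ∀ x y : V, x ∉ sideRoot G e r → y ∉ sideRoot G e r →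
        (G.deleteEdges {s(u', v')}).Reachable x y := by
      intro x y hx hy
      rw [mem_sideRoot] at hx hy
      obtain ⟨w⟩ := del_two_classes hG he r x y hx hy
      have hsupp : ∀ z ∈ w.support, z ∉ sideRoot G e r := by
        intro z hz hzS
        rw [mem_sideRoot] at hzS
        exact hx (hzS.trans (support_reachable w hz).symm)
      have he'w : s(u', v') ∉ w.edges := fun hmem =>
        hsupp u' (w.fst_mem_support_of_mem_edges hmem) hu'S
      refine ⟨w.transfer _ ?_⟩
      intro f hf
      rw [SimpleGraph.edgeSet_deleteEdges]
      have hfG := w.edges_subset_edgeSet hf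
      rw [SimpleGraph.edgeSet_deleteEdges] at hfG
      refine ⟨hfG.1, ?_⟩
      intro hfe
      rw [Set.mem_singleton_iff] at hfe
      exact he'w (hfe ▸ hf)
    by_cases hex : ∃ x, x ∉ sideRoot G e r ∧ x ∉ sideRoot G s(u', v') r
    · obtain ⟨x, hxS, hxS'⟩ := hex
      refine Or.inr (Or.inl ?_)
      intro z hz
      by_contra hzS
      rw [mem_sideRoot] at hz hxS'
      exact hxS' ((hz.trans (claim z x hzS hxS)))
    · push_neg at hex
      exact Or.inr (Or.inr fun x => by
        by_cases hxS : x ∈ sideRoot G e r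
        · exact Or.inl hxS
        · exact Or.inr (hex x hxS))
  · -- u', v' ∉ S : then S ⊆ S'
    have hv'S : v' ∉ sideRoot G e r := fun h => hu'S (hsame.mpr h)
    left
    intro x hx
    obtain ⟨w⟩ := mem_sideRoot.mp hx
    have hsupp : ∀ z ∈ w.support, z ∈ sideRoot G e r := fun z hz =>
      mem_sideRoot.mpr (support_reachable w hz)
    have he'w : s(u', v') ∉ w.edges := fun hmem =>
      hu'S (hsupp u' (w.fst_mem_support_of_mem_edges hmem))
    refine mem_sideRoot.mpr ⟨w.transfer _ ?_⟩
    intro f hf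
    rw [SimpleGraph.edgeSet_deleteEdges]
    have hfG := w.edges_subset_edgeSet hf
    rw [SimpleGraph.edgeSet_deleteEdges] at hfG
    refine ⟨hfG.1, ?_⟩
    intro hfe
    rw [Set.mem_singleton_iff] at hfe
    exact he'w (hfe ▸ hf)

lemma quad (hG : G.IsTree) {e : Sym2 V} (he : e ∈ G.edgeSet) (r : V) {a b c d : V}
    (ha : a ∈ sideRoot G e r) (hd : d ∈ sideRoot G e r)
    (hb : b ∉ sideRoot G e r) (hc : c ∉ sideRoot G e r) :
    treeDist G hG (fun _ => 1) a d + treeDist G hG (fun _ => 1) c b + 2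
      ≤ treeDist G hG (fun _ => 1) a b + treeDist G hG (fun _ => 1) c d := by
  have heE : e ∈ edgeFinset' G := by simp [edgeFinset', he]
  set φ : Sym2 V → ℝ := fun f =>
    ((if f ∈ (treePath G hG a b).edges then (1:ℝ) else 0)
      + (if f ∈ (treePath G hG c d).edges then (1:ℝ) else 0))
    - ((if f ∈ (treePath G hG a d).edges then (1:ℝ) else 0)
      + (if f ∈ (treePath G hG c b).edges then (1:ℝ) else 0)) with hφ
  have hφe : φ e = 2 := by
    simp only [hφ, edge_mem_path_iff hG he r, ha, hd, hb, hc]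
    norm_num
  have hφnn : ∀ f ∈ edgeFinset' G, 0 ≤ φ f := by
    intro f hfE
    have hf : f ∈ G.edgeSet := by simpa [edgeFinset'] using hfE
    by_cases hfe : f = e
    · subst hfe; rw [hφe]; norm_num
    · rcases laminar hG hf he hfe r with hss | hss | hss
      · have hbf : b ∉ sideRoot G f r := fun h => hb (hss h)
        have hcf : c ∉ sideRoot G f r := fun h => hc (hss h)
        by_cases haf : a ∈ sideRoot G f r <;> by_cases hdf : d ∈ sideRoot G f r <;>
          simp [hφ, edge_mem_path_iff hG hf r, haf, hdf, hbf, hcf] <;> norm_num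
      · have haf : a ∈ sideRoot G f r := hss ha
        have hdf : d ∈ sideRoot G f r := hss hd
        by_cases hbf : b ∈ sideRoot G f r <;> by_cases hcf : c ∈ sideRoot G f r <;>
          simp [hφ, edge_mem_path_iff hG hf r, haf, hdf, hbf, hcf] <;> norm_num
      · have hbf : b ∈ sideRoot G f r := (hss b).resolve_right hb
        have hcf : c ∈ sideRoot G f r := (hss c).resolve_right hc
        by_cases haf : a ∈ sideRoot G f r <;> by_cases hdf : d ∈ sideRoot G f r <;>
          simp [hφ, edge_mem_path_iff hG hf r, haf, hdf, hbf, hcf] <;> norm_num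
  have h2 : (2:ℝ) ≤ ∑ f ∈ edgeFinset' G, φ f := by
    calc (2:ℝ) = φ e := hφe.symm
      _ ≤ ∑ f ∈ edgeFinset' G, φ f := Finset.single_le_sum hφnn heE
  rw [treeDist_eq hG, treeDist_eq hG, treeDist_eq hG, treeDist_eq hG]
  have hsum : ∑ f ∈ edgeFinset' G, φ f
      = ((∑ f ∈ edgeFinset' G, if f ∈ (treePath G hG a b).edges then (1:ℝ) else 0)
        + ∑ f ∈ edgeFinset' G, if f ∈ (treePath G hG c d).edges then (1:ℝ) else 0)
      - ((∑ f ∈ edgeFinset' G, if f ∈ (treePath G hG a d).edges then (1:ℝ) else 0)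
        + ∑ f ∈ edgeFinset' G, if f ∈ (treePath G hG c b).edges then (1:ℝ) else 0) := by
    rw [hφ, Finset.sum_sub_distrib, Finset.sum_add_distrib, Finset.sum_add_distrib]
  rw [hsum] at h2
  linarith


lemma pick_sum (f : V → V → ℝ) (x y : V) :
    ∑ i, ∑ j, f i j * (if i = x ∧ j = y then (1:ℝ) else 0) = f x y := by
  simp [ite_and, mul_ite, Finset.sum_ite_eq']

lemma exists_pos_entry {S T : Finset V} {f : V → V → ℝ}
    (h : 0 < ∑ i ∈ S, ∑ j ∈ T, f i j) : ∃ i ∈ S, ∃ j ∈ T, 0 < f i j := by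
  by_contra hcon
  push_neg at hcon
  have : ∑ i ∈ S, ∑ j ∈ T, f i j ≤ 0 :=
    Finset.sum_nonpos fun i hi => Finset.sum_nonpos fun j hj => hcon i hi j hj
  linarith


lemma optimal_cross (hG : G.IsTree) (r : V) {P Q : V → ℝ} {M : V → V → ℝ}
    (hM : IsFlow P Q M)
    (hmin : ∀ N, IsFlow P Q N → cost G hG (fun _ => 1) M ≤ cost G hG (fun _ => 1) N)
    {e : Sym2 V} (he : e ∈ G.edgeSet) :
    ∑ i ∈ sideRoot G e r, ∑ j ∈ (sideRoot G e r)ᶜ, (M i j + M j i)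
      = |∑ i ∈ sideRoot G e r, (P i - Q i)| := by
  set S := sideRoot G e r with hS
  by_contra hnecross
  have hA0 : 0 ≤ ∑ i ∈ S, ∑ j ∈ Sᶜ, M i j :=
    Finset.sum_nonneg fun i _ => Finset.sum_nonneg fun j _ => hM.1 i j
  have hB0 : 0 ≤ ∑ i ∈ S, ∑ j ∈ Sᶜ, M j i :=
    Finset.sum_nonneg fun i _ => Finset.sum_nonneg fun j _ => hM.1 j i
  have hsplit : ∑ i ∈ S, ∑ j ∈ Sᶜ, (M i j + M j i)
      = (∑ i ∈ S, ∑ j ∈ Sᶜ, M i j) + ∑ i ∈ S, ∑ j ∈ Sᶜ, M j i := by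
    simp [Finset.sum_add_distrib]
  have hdiff := flow_diff hM S
  have hA : 0 < ∑ i ∈ S, ∑ j ∈ Sᶜ, M i j := by
    by_contra hA'
    push_neg at hA'
    have hAz : ∑ i ∈ S, ∑ j ∈ Sᶜ, M i j = 0 := le_antisymm hA' hA0
    apply hnecross
    rw [hsplit, ← hdiff, hAz, zero_sub, abs_neg, abs_of_nonneg hB0, zero_add]
  have hB : 0 < ∑ i ∈ S, ∑ j ∈ Sᶜ, M j i := by
    by_contra hB'
    push_neg at hB'
    have hBz : ∑ i ∈ S, ∑ j ∈ Sᶜ, M j i = 0 := le_antisymm hB' hB0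
    apply hnecross
    rw [hsplit, ← hdiff, hBz, sub_zero, abs_of_nonneg hA0, add_zero]
  obtain ⟨a, haS, b, hbc, hab⟩ := exists_pos_entry hA
  obtain ⟨d, hdS, c, hcc, hcd⟩ := exists_pos_entry hB
  have hbS : b ∉ S := Finset.mem_compl.mp hbc
  have hcS : c ∉ S := Finset.mem_compl.mp hcc
  have hac : a ≠ c := fun h => hcS (h ▸ haS)
  have hbd : b ≠ d := fun h => hbS (h ▸ hdS)
  set ε := min (M a b) (M c d) with hε
  have hεpos : 0 < ε := lt_min hab hcd
  set g : V → V → ℝ := fun i j =>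
    ((if i = a ∧ j = d then (1:ℝ) else 0) + (if i = c ∧ j = b then 1 else 0))
    - ((if i = a ∧ j = b then 1 else 0) + (if i = c ∧ j = d then 1 else 0)) with hg
  set N : V → V → ℝ := fun i j => M i j + ε * g i j with hN
  have gsum_row : ∀ i, ∑ j, g i j = 0 := by
    intro i
    by_cases hia : i = a
    · simp [hg, hia, hac, Finset.sum_sub_distrib, Finset.sum_add_distrib,
        Finset.sum_ite_eq']
    · by_cases hic : i = c
      · simp [hg, hic, (Ne.symm hac), Finset.sum_sub_distrib, Finset.sum_add_distrib,
          Finset.sum_ite_eq']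
      · simp [hg, hia, hic]
  have gsum_col : ∀ j, ∑ i, g i j = 0 := by
    intro j
    by_cases hjd : j = d
    · simp [hg, hjd, (Ne.symm hbd), Finset.sum_sub_distrib, Finset.sum_add_distrib,
        Finset.sum_ite_eq']
    · by_cases hjb : j = b
      · simp [hg, hjb, hbd, Finset.sum_sub_distrib, Finset.sum_add_distrib,
          Finset.sum_ite_eq']
      · simp [hg, hjd, hjb]
  have hNflow : IsFlow P Q N := by
    refine ⟨?_, ?_, ?_⟩
    · intro i j
      by_cases h1 : i = a ∧ j = b
      · have hgv : g i j = -1 := by simp [hg, h1.1, h1.2, hbd, hac]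
        have hmle := min_le_left (M a b) (M c d)
        simp only [hN, hgv]
        rw [h1.1, h1.2, mul_neg_one]
        rw [← hε] at hmle
        linarith
      · by_cases h2 : i = c ∧ j = d
        · have hgv : g i j = -1 := by simp [hg, h2.1, h2.2, (Ne.symm hbd), (Ne.symm hac)]
          have hmle := min_le_right (M a b) (M c d)
          simp only [hN, hgv]
          rw [h2.1, h2.2, mul_neg_one]
          rw [← hε] at hmle
          linarith
        · have hgv : 0 ≤ g i j := by
            have e3 : (if i = a ∧ j = b then (1:ℝ) else 0) = 0 := if_neg h1
            have e4 : (if i = c ∧ j = d then (1:ℝ) else 0) = 0 := if_neg h2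
            simp only [hg, e3, e4]
            split_ifs <;> norm_num
          have hm := hM.1 i j
          simp only [hN]
          nlinarith
    · intro i
      simp only [hN]
      rw [Finset.sum_add_distrib, ← Finset.mul_sum, gsum_row, mul_zero, add_zero]
      exact hM.2.1 i
    · intro j
      simp only [hN]
      rw [Finset.sum_add_distrib, ← Finset.mul_sum, gsum_col, mul_zero, add_zero]
      exact hM.2.2 j
  have hDg : ∑ i, ∑ j, treeDist G hG (fun _ => 1) i j * g i j
      = (treeDist G hG (fun _ => 1) a d + treeDist G hG (fun _ => 1) c b)
        - (treeDist G hG (fun _ => 1) a b + treeDist G hG (fun _ => 1) c d) := by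
    simp only [hg]
    simp_rw [mul_sub, mul_add, Finset.sum_sub_distrib, Finset.sum_add_distrib, pick_sum]
  have hcostN : cost G hG (fun _ => 1) N = cost G hG (fun _ => 1) M
      + ε * ((treeDist G hG (fun _ => 1) a d + treeDist G hG (fun _ => 1) c b)
        - (treeDist G hG (fun _ => 1) a b + treeDist G hG (fun _ => 1) c d)) := by
    unfold cost
    rw [← hDg, Finset.mul_sum, ← Finset.sum_add_distrib]
    apply Finset.sum_congr rfl
    intro i _
    rw [Finset.mul_sum, ← Finset.sum_add_distrib]
    apply Finset.sum_congr rfl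
    intro j _
    simp only [hN]
    ring
  have hq := quad hG he r haS hdS hbS hcS
  have hle := hmin N hNflow
  rw [hcostN] at hle
  nlinarith


lemma cost_continuous (hG : G.IsTree) (l : Sym2 V → ℝ) :
    Continuous (cost G hG l) := by
  apply continuous_finset_sum
  intro i _
  apply continuous_finset_sum
  intro j _
  exact continuous_const.mul ((continuous_apply j).comp (continuous_apply i))

lemma exists_min_flow {P Q : V → ℝ} (hP : IsProb P) (hQ : IsProb Q)
    (f : (V → V → ℝ) → ℝ) (hf : Continuous f) :
    ∃ M, IsFlow P Q M ∧ ∀ N, IsFlow P Q N → f M ≤ f N := by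
  set K : Set (V → V → ℝ) := {M | IsFlow P Q M} with hK
  have hne : K.Nonempty := by
    refine ⟨fun i j => P i * Q j, ⟨fun i j => mul_nonneg (hP.1 i) (hQ.1 j), ?_, ?_⟩⟩
    · intro i
      rw [← Finset.mul_sum, hQ.2, mul_one]
    · intro j
      rw [← Finset.sum_mul, hP.2, one_mul]
  have hclosed : IsClosed K := by
    have hdecomp : K = (⋂ i, ⋂ j, {M : V → V → ℝ | 0 ≤ M i j})
        ∩ ((⋂ i, {M : V → V → ℝ | ∑ j, M i j = P i})
          ∩ (⋂ j, {M : V → V → ℝ | ∑ i, M i j = Q j})) := by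
      ext M
      simp only [hK, Set.mem_inter_iff, Set.mem_iInter, Set.mem_setOf_eq, IsFlow]
    rw [hdecomp]
    have hev : ∀ i j : V, Continuous fun M : V → V → ℝ => M i j := fun i j =>
      (continuous_apply j).comp (continuous_apply i)
    refine IsClosed.inter ?_ (IsClosed.inter ?_ ?_)
    · exact isClosed_iInter fun i => isClosed_iInter fun j =>
        isClosed_le continuous_const (hev i j)
    · exact isClosed_iInter fun i =>
        isClosed_eq (continuous_finset_sum _ fun j _ => hev i j) continuous_const
    · exact isClosed_iInter fun j =>
        isClosed_eq (continuous_finset_sum _ fun i _ => hev i j) continuous_const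
  have hsub : K ⊆ Set.univ.pi fun _ : V => Set.univ.pi fun _ : V => Set.Icc (0:ℝ) 1 := by
    intro M hMK
    rw [Set.mem_univ_pi]
    intro i
    rw [Set.mem_univ_pi]
    intro j
    constructor
    · exact hMK.1 i j
    · have h1 : M i j ≤ ∑ j', M i j' :=
        Finset.single_le_sum (fun j' _ => hMK.1 i j') (Finset.mem_univ j)
      have h2 : P i ≤ ∑ i', P i' :=
        Finset.single_le_sum (fun i' _ => hP.1 i') (Finset.mem_univ i)
      rw [hMK.2.1 i] at h1
      rw [hP.2] at h2
      linarith
  have hcpt : IsCompact K :=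
    IsCompact.of_isClosed_subset
      (isCompact_univ_pi fun _ => isCompact_univ_pi fun _ => isCompact_Icc) hclosed hsub
  obtain ⟨M, hMK, hminM⟩ := hcpt.exists_isMinOn hne hf.continuousOn
  exact ⟨M, hMK, fun N hN => isMinOn_iff.mp hminM N hN⟩

end Stmt6

/-- There exists a flow achieving, on every edge, the lower bound
`∑_{i ∈ T_e} ∑_{j ∈ T'_e} (M i j + M j i) = |∑_{i ∈ T_e} (P i - Q i)|`; consequently
`EMD(P,Q) = ∑ₑ l e * |∑_{i ∈ T_e} (P i - Q i)|`. -/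
theorem stmt6 {V : Type*} [Fintype V] (G : SimpleGraph V) (hG : G.IsTree)
    (l : Sym2 V → ℝ) (hl : ∀ e, 0 ≤ l e) (r : V)
    (P Q : V → ℝ) (hP : IsProb P) (hQ : IsProb Q) :
    (∃ M : V → V → ℝ, IsFlow P Q M ∧
      ∀ e ∈ G.edgeSet,
        ∑ i ∈ sideRoot G e r, ∑ j ∈ (sideRoot G e r)ᶜ, (M i j + M j i) =
          |∑ i ∈ sideRoot G e r, (P i - Q i)|) ∧
    EMD G hG l P Q =
      ∑ e ∈ edgeFinset' G, l e * |∑ i ∈ sideRoot G e r, (P i - Q i)| := by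
  obtain ⟨M, hM, hmin⟩ :=
    Stmt6.exists_min_flow hP hQ (cost G hG (fun _ => 1)) (Stmt6.cost_continuous hG _)
  have hcrossM : ∀ e ∈ G.edgeSet,
      ∑ i ∈ sideRoot G e r, ∑ j ∈ (sideRoot G e r)ᶜ, (M i j + M j i)
        = |∑ i ∈ sideRoot G e r, (P i - Q i)| :=
    fun e he => Stmt6.optimal_cross hG r hM hmin he
  have hcostM : cost G hG l M
      = ∑ e ∈ edgeFinset' G, l e * |∑ i ∈ sideRoot G e r, (P i - Q i)| := by
    rw [Stmt6.cost_eq hG l r M]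
    refine Finset.sum_congr rfl fun e heE => ?_
    have he : e ∈ G.edgeSet := by simpa [edgeFinset'] using heE
    rw [hcrossM e he]
  refine ⟨⟨M, hM, hcrossM⟩, ?_⟩
  have hlb : ∀ cc ∈ {c | ∃ N, IsFlow P Q N ∧ c = cost G hG l N},
      (∑ e ∈ edgeFinset' G, l e * |∑ i ∈ sideRoot G e r, (P i - Q i)|) ≤ cc := by
    rintro cc ⟨N, hN, rfl⟩
    rw [Stmt6.cost_eq hG l r N]
    exact Finset.sum_le_sum fun e heE =>
      mul_le_mul_of_nonneg_left (Stmt6.cross_lower hN _) (hl e)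
  unfold EMD
  apply le_antisymm
  · exact csInf_le ⟨_, hlb⟩ ⟨M, hM, hcostM.symm⟩
  · exact le_csInf ⟨_, ⟨M, hM, rfl⟩⟩ hlb
end
end

section
/- For the EMD on a tree with strictly positive edge lengths, there exists a minimizing flow M with M_{i,i} = min(P_i, Q_i) for all vertices i. -/
open scoped Classical BigOperators

noncomputable section

/-! ### Auxiliary lemmas -/

lemma treePath_isPath {V : Type*} (G : SimpleGraph V) (hG : G.IsTree) (i j : V) :
    (treePath G hG i j).IsPath := (hG.existsUnique_path i j).choose_spec.1

lemma treePath_unique {V : Type*} (G : SimpleGraph V) (hG : G.IsTree) {i j : V}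
    (p : G.Walk i j) (hp : p.IsPath) : p = treePath G hG i j :=
  (hG.existsUnique_path i j).choose_spec.2 p hp

lemma list_toFinset_sum_le {α : Type*} [DecidableEq α] (L : List α) (f : α → ℝ)
    (hf : ∀ a ∈ L, 0 ≤ f a) : ∑ a ∈ L.toFinset, f a ≤ (L.map f).sum := by
  induction L with
  | nil => simp
  | cons a t ih =>
    simp only [List.toFinset_cons, List.map_cons, List.sum_cons]
    have ht : ∑ x ∈ t.toFinset, f x ≤ (t.map f).sum :=
      ih fun x hx => hf x (List.mem_cons_of_mem _ hx)
    by_cases ha : a ∈ t.toFinset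
    · rw [Finset.insert_eq_self.2 ha]
      have : 0 ≤ f a := hf a (List.mem_cons_self (a := a) (l := t))
      linarith
    · rw [Finset.sum_insert ha]; linarith

lemma treeDist_le_walk {V : Type*} (G : SimpleGraph V) (hG : G.IsTree) (l : Sym2 V → ℝ)
    (hl : ∀ e ∈ G.edgeSet, 0 ≤ l e) {i j : V} (w : G.Walk i j) :
    treeDist G hG l i j ≤ (w.edges.map l).sum := by
  classical
  have hb : w.bypass = treePath G hG i j := treePath_unique G hG _ w.bypass_isPath
  have h1 : treeDist G hG l i j = (w.bypass.edges.map l).sum := by rw [treeDist, hb]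
  rw [h1]
  have hnd : w.bypass.edges.Nodup := w.bypass_isPath.isTrail.edges_nodup
  have h2 : (w.bypass.edges.map l).sum = ∑ e ∈ w.bypass.edges.toFinset, l e := by
    rw [List.sum_toFinset _ hnd]
  rw [h2]
  have h3 : ∑ e ∈ w.bypass.edges.toFinset, l e ≤ ∑ e ∈ w.edges.toFinset, l e := by
    apply Finset.sum_le_sum_of_subset_of_nonneg
    · intro e he
      simp only [List.mem_toFinset] at he ⊢
      exact w.edges_bypass_subset he
    · intro e he _
      exact hl e (w.edges_subset_edgeSet (List.mem_toFinset.1 he))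
  exact h3.trans (list_toFinset_sum_le _ _ fun e he => hl e (w.edges_subset_edgeSet he))

lemma treeDist_self' {V : Type*} (G : SimpleGraph V) (hG : G.IsTree) (l : Sym2 V → ℝ) (i : V) :
    treeDist G hG l i i = 0 := by
  have : (SimpleGraph.Walk.nil : G.Walk i i) = treePath G hG i i :=
    treePath_unique G hG _ SimpleGraph.Walk.IsPath.nil
  rw [treeDist, ← this]; simp

lemma treeDist_triangle' {V : Type*} (G : SimpleGraph V) (hG : G.IsTree) (l : Sym2 V → ℝ)
    (hl : ∀ e ∈ G.edgeSet, 0 ≤ l e) (k i j : V) :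
    treeDist G hG l k j ≤ treeDist G hG l k i + treeDist G hG l i j := by
  have := treeDist_le_walk G hG l hl ((treePath G hG k i).append (treePath G hG i j))
  rwa [SimpleGraph.Walk.edges_append, List.map_append, List.sum_append] at this

/-- Rerouting lemma: if a flow has a deficient diagonal entry, one can find another flow
with no larger cost and strictly larger trace. -/
lemma swap_lemma {V : Type*} [Fintype V] (P Q : V → ℝ) (D : V → V → ℝ)
    (hD0 : ∀ i, D i i = 0) (hDtri : ∀ k i j, D k j ≤ D k i + D i j)
    (M : V → V → ℝ)
    (hM : (∀ i j, 0 ≤ M i j) ∧ (∀ i, ∑ j, M i j = P i) ∧ (∀ j, ∑ i, M i j = Q j))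
    (i : V) (hlt : M i i < min (P i) (Q i)) :
    ∃ N : V → V → ℝ,
      ((∀ a b, 0 ≤ N a b) ∧ (∀ a, ∑ b, N a b = P a) ∧ (∀ b, ∑ a, N a b = Q b)) ∧
      (∑ a, ∑ b, D a b * N a b ≤ ∑ a, ∑ b, D a b * M a b) ∧
      (∑ a, M a a < ∑ a, N a a) := by
  obtain ⟨h0, hrow, hcol⟩ := hM
  have hPi : ∑ b, M i b = P i := hrow i
  have hrow' : M i i + ∑ b ∈ Finset.univ.erase i, M i b = P i := by
    rw [Finset.add_sum_erase _ _ (Finset.mem_univ i)]; exact hPi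
  have hsum_pos : (0:ℝ) < ∑ b ∈ Finset.univ.erase i, M i b := by
    have := min_le_left (P i) (Q i); linarith
  obtain ⟨j, hjmem, hMij⟩ : ∃ j ∈ Finset.univ.erase i, (0:ℝ) < M i j := by
    by_contra h
    push_neg at h
    have : ∑ b ∈ Finset.univ.erase i, M i b ≤ 0 :=
      Finset.sum_nonpos fun b hb => h b hb
    linarith
  have hji : j ≠ i := Finset.ne_of_mem_erase hjmem
  have hQi : ∑ a, M a i = Q i := hcol i
  have hcol' : M i i + ∑ a ∈ Finset.univ.erase i, M a i = Q i := by
    rw [Finset.add_sum_erase _ (fun a => M a i) (Finset.mem_univ i)]; exact hQi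
  have hsum_pos' : (0:ℝ) < ∑ a ∈ Finset.univ.erase i, M a i := by
    have := min_le_right (P i) (Q i); linarith
  obtain ⟨k, hkmem, hMki⟩ : ∃ k ∈ Finset.univ.erase i, (0:ℝ) < M k i := by
    by_contra h
    push_neg at h
    have : ∑ a ∈ Finset.univ.erase i, M a i ≤ 0 :=
      Finset.sum_nonpos fun a ha => h a ha
    linarith
  have hki : k ≠ i := Finset.ne_of_mem_erase hkmem
  have hik : i ≠ k := hki.symm
  have hij : i ≠ j := hji.symm
  set ε : ℝ := min (M i j) (M k i) with hε
  have hεpos : 0 < ε := lt_min hMij hMki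
  have hεij : ε ≤ M i j := min_le_left _ _
  have hεki : ε ≤ M k i := min_le_right _ _
  set d : V → V → ℝ := fun a c => if a = c then 1 else 0 with hd
  have hps : ∀ (f : V → ℝ) (c : V), ∑ a, d a c * f a = f c := by
    intro f c
    simp [hd, ite_mul, one_mul, zero_mul, Finset.sum_ite_eq']
  have hdsum : ∀ c : V, ∑ a, d a c = 1 := by
    intro c; simpa using hps (fun _ => 1) c
  set N : V → V → ℝ := fun a b =>
    M a b + ε * (d a i * d b i + d a k * d b j - d a i * d b j - d a k * d b i) with hN
  have key : ∀ (c e : V), ∑ a, ∑ b, D a b * (d a c * d b e) = D c e := by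
    intro c e
    have h1 : ∀ a b, D a b * (d a c * d b e) = d a c * (d b e * D a b) := by intros; ring
    simp_rw [h1, ← Finset.mul_sum]
    have h2 : ∀ a, ∑ b, d b e * D a b = D a e := fun a => hps (fun b => D a b) e
    simp_rw [h2]
    exact hps (fun a => D a e) c
  have hdd : ∀ c e : V, ∑ a, d a c * d a e = d c e := fun c e => hps (fun a => d a e) c
  refine ⟨N, ⟨?_, ?_, ?_⟩, ?_, ?_⟩
  · -- nonneg
    intro a b
    by_cases hai : a = i <;> by_cases hak : a = k <;> by_cases hbi : b = i <;>
        by_cases hbj : b = j <;>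
      first
      | exact absurd (hai.symm.trans hak) hik
      | exact absurd (hbi.symm.trans hbj) hij
      | (simp only [hN, hd, hai, hak, hbi, hbj, if_pos rfl, if_neg hik, if_neg hij,
          if_neg hki, if_neg hji, eq_self_iff_true, if_true, if_false, mul_one, mul_zero,
          one_mul, zero_mul, add_zero, zero_add, sub_zero, zero_sub, sub_self]
         linarith [h0 a b, h0 i b, h0 k b, h0 a i, h0 a j, h0 i i, h0 i j, h0 k i, h0 k j])
  · -- row sums
    intro a
    simp only [hN]
    rw [Finset.sum_add_distrib, hrow a]
    have : ∑ b, ε * (d a i * d b i + d a k * d b j - d a i * d b j - d a k * d b i) = 0 := by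
      rw [← Finset.mul_sum]
      have h3 : ∑ b, (d a i * d b i + d a k * d b j - d a i * d b j - d a k * d b i)
          = d a i * (∑ b, d b i) + d a k * (∑ b, d b j)
            - d a i * (∑ b, d b j) - d a k * (∑ b, d b i) := by
        simp only [Finset.sum_sub_distrib, Finset.sum_add_distrib, Finset.mul_sum]
      rw [h3, hdsum, hdsum]; ring_nf
    rw [this, add_zero]
  · -- column sums
    intro b
    simp only [hN]
    rw [Finset.sum_add_distrib, hcol b]
    have : ∑ a, ε * (d a i * d b i + d a k * d b j - d a i * d b j - d a k * d b i) = 0 := by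
      rw [← Finset.mul_sum]
      have h3 : ∑ a, (d a i * d b i + d a k * d b j - d a i * d b j - d a k * d b i)
          = (∑ a, d a i) * d b i + (∑ a, d a k) * d b j
            - (∑ a, d a i) * d b j - (∑ a, d a k) * d b i := by
        simp only [Finset.sum_sub_distrib, Finset.sum_add_distrib, Finset.sum_mul]
      rw [h3, hdsum, hdsum]; ring_nf
    rw [this, add_zero]
  · -- cost does not increase
    have hexp : ∑ a, ∑ b, D a b * N a b
        = (∑ a, ∑ b, D a b * M a b) + ε * (D i i + D k j - D i j - D k i) := by
      simp only [hN]
      have h1 : ∀ a b, D a b * (M a b + ε * (d a i * d b i + d a k * d b j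
          - d a i * d b j - d a k * d b i))
          = D a b * M a b + ε * (D a b * (d a i * d b i) + D a b * (d a k * d b j)
            - D a b * (d a i * d b j) - D a b * (d a k * d b i)) := by intros; ring
      simp_rw [h1]
      simp only [Finset.sum_add_distrib, Finset.sum_sub_distrib, ← Finset.mul_sum]
      rw [key i i, key k j, key i j, key k i]
    rw [hexp]
    have h4 := hDtri k i j
    have h5 := hD0 i
    nlinarith [hεpos.le]
  · -- trace strictly increases
    have hexp : ∑ a, N a a = (∑ a, M a a) + ε * (1 + d k j) := by
      simp only [hN]
      rw [Finset.sum_add_distrib]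
      congr 1
      rw [← Finset.mul_sum]
      have h3 : ∑ a, (d a i * d a i + d a k * d a j - d a i * d a j - d a k * d a i)
          = (∑ a, d a i * d a i) + (∑ a, d a k * d a j)
            - (∑ a, d a i * d a j) - (∑ a, d a k * d a i) := by
        simp only [Finset.sum_sub_distrib, Finset.sum_add_distrib]
      rw [h3, hdd, hdd, hdd, hdd]
      have h6 : d i i = 1 := by simp [hd]
      have h4 : d i j = 0 := by simp [hd, hij]
      have h5 : d k i = 0 := by simp [hd, hki]
      rw [h6, h4, h5]; ring
    have hdkj : 0 ≤ d k j := by by_cases h : k = j <;> simp [hd, h]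
    rw [hexp]
    nlinarith [hεpos]

/-- With strictly positive edge lengths, there exists a minimizing flow
whose diagonal satisfies `M i i = min (P i) (Q i)` for all `i`. -/
theorem stmt11 {V : Type*} [Fintype V] (G : SimpleGraph V) (hG : G.IsTree)
    (l : Sym2 V → ℝ) (hl : ∀ e ∈ G.edgeSet, 0 < l e)
    (P Q : V → ℝ) (hP : IsProb P) (hQ : IsProb Q) :
    ∃ M : V → V → ℝ, IsFlow P Q M ∧ cost G hG l M = EMD G hG l P Q ∧
      ∀ i, M i i = min (P i) (Q i) := by
  classical
  set D : V → V → ℝ := treeDist G hG l with hD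
  have hl0 : ∀ e ∈ G.edgeSet, 0 ≤ l e := fun e he => (hl e he).le
  have hD0 : ∀ i, D i i = 0 := fun i => treeDist_self' G hG l i
  have hDtri : ∀ k i j, D k j ≤ D k i + D i j := fun k i j =>
    treeDist_triangle' G hG l hl0 k i j
  have hcost_eq : ∀ M : V → V → ℝ, cost G hG l M = ∑ a, ∑ b, D a b * M a b := fun M => rfl
  -- topological setup
  have heval : ∀ (i j : V), Continuous fun M : V → V → ℝ => M i j := fun i j =>
    (continuous_apply j).comp (continuous_apply i)
  have hcostc : Continuous fun M : V → V → ℝ => ∑ a, ∑ b, D a b * M a b :=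
    continuous_finset_sum _ fun a _ => continuous_finset_sum _ fun b _ =>
      continuous_const.mul (heval a b)
  have htrc : Continuous fun M : V → V → ℝ => ∑ a, M a a :=
    continuous_finset_sum _ fun a _ => heval a a
  set S : Set (V → V → ℝ) := {M | IsFlow P Q M} with hS
  have hSne : S.Nonempty := by
    refine ⟨fun a b => P a * Q b, fun a b => mul_nonneg (hP.1 a) (hQ.1 b), ?_, ?_⟩
    · intro a; rw [← Finset.mul_sum, hQ.2, mul_one]
    · intro b; simp only [← Finset.sum_mul, hP.2, one_mul]
  have hclosed : IsClosed S := by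
    have h1 : IsClosed {M : V → V → ℝ | ∀ i j, 0 ≤ M i j} := by
      have : {M : V → V → ℝ | ∀ i j, 0 ≤ M i j} = ⋂ i, ⋂ j, {M | 0 ≤ M i j} := by
        ext M; simp
      rw [this]
      exact isClosed_iInter fun i => isClosed_iInter fun j =>
        isClosed_le continuous_const (heval i j)
    have h2 : IsClosed {M : V → V → ℝ | ∀ i, ∑ j, M i j = P i} := by
      have : {M : V → V → ℝ | ∀ i, ∑ j, M i j = P i} = ⋂ i, {M | ∑ j, M i j = P i} := by
        ext M; simp
      rw [this]
      exact isClosed_iInter fun i =>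
        isClosed_eq (continuous_finset_sum _ fun j _ => heval i j) continuous_const
    have h3 : IsClosed {M : V → V → ℝ | ∀ j, ∑ i, M i j = Q j} := by
      have : {M : V → V → ℝ | ∀ j, ∑ i, M i j = Q j} = ⋂ j, {M | ∑ i, M i j = Q j} := by
        ext M; simp
      rw [this]
      exact isClosed_iInter fun j =>
        isClosed_eq (continuous_finset_sum _ fun i _ => heval i j) continuous_const
    have : S = {M : V → V → ℝ | ∀ i j, 0 ≤ M i j} ∩
        ({M | ∀ i, ∑ j, M i j = P i} ∩ {M | ∀ j, ∑ i, M i j = Q j}) := rfl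
    rw [this]; exact h1.inter (h2.inter h3)
  have hP1 : ∀ i, P i ≤ 1 := fun i => by
    rw [← hP.2]; exact Finset.single_le_sum (fun j _ => hP.1 j) (Finset.mem_univ i)
  have hcomp : IsCompact S := by
    refine IsCompact.of_isClosed_subset (isCompact_Icc (a := fun _ _ => (0:ℝ))
      (b := fun _ _ => (1:ℝ))) hclosed ?_
    rintro M ⟨h0, hrow, _⟩
    constructor
    · intro a; intro b; exact h0 a b
    · intro a; intro b
      calc M a b ≤ ∑ j, M a j :=
            Finset.single_le_sum (fun j _ => h0 a j) (Finset.mem_univ b)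
        _ = P a := hrow a
        _ ≤ 1 := hP1 a
  obtain ⟨M₀, hM₀, hmin⟩ := hcomp.exists_isMinOn hSne hcostc.continuousOn
  have hEMD : EMD G hG l P Q = ∑ a, ∑ b, D a b * M₀ a b := by
    apply IsLeast.csInf_eq
    constructor
    · exact ⟨M₀, hM₀, (hcost_eq M₀)⟩
    · rintro c ⟨M, hM, rfl⟩
      rw [hcost_eq M]
      exact hmin hM
  set S' : Set (V → V → ℝ) :=
    S ∩ {M | ∑ a, ∑ b, D a b * M a b = ∑ a, ∑ b, D a b * M₀ a b} with hS'
  have hcomp' : IsCompact S' := hcomp.inter_right (isClosed_eq hcostc continuous_const)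
  obtain ⟨M₁, hM₁, hmax⟩ := hcomp'.exists_isMaxOn ⟨M₀, hM₀, rfl⟩ htrc.continuousOn
  obtain ⟨hM₁S, hM₁c⟩ := hM₁
  refine ⟨M₁, hM₁S, by rw [hcost_eq M₁, hEMD]; exact hM₁c, ?_⟩
  intro i
  obtain ⟨h0, hrow, hcol⟩ := hM₁S
  have hle : M₁ i i ≤ min (P i) (Q i) := by
    refine le_min ?_ ?_
    · rw [← hrow i]
      exact Finset.single_le_sum (fun j _ => h0 i j) (Finset.mem_univ i)
    · rw [← hcol i]
      exact Finset.single_le_sum (fun a _ => h0 a i) (Finset.mem_univ i)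
  rcases eq_or_lt_of_le hle with heq | hlt
  · exact heq
  · exfalso
    obtain ⟨N, hNflow, hNcost, hNtr⟩ :=
      swap_lemma P Q D hD0 hDtri M₁ ⟨h0, hrow, hcol⟩ i hlt
    have hNS : N ∈ S := hNflow
    have hNc : ∑ a, ∑ b, D a b * N a b = ∑ a, ∑ b, D a b * M₀ a b := by
      have h1 : ∑ a, ∑ b, D a b * M₀ a b ≤ ∑ a, ∑ b, D a b * N a b := hmin hNS
      have h2 : ∑ a, ∑ b, D a b * N a b ≤ ∑ a, ∑ b, D a b * M₁ a b := hNcost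
      linarith [hM₁c.le, hM₁c.ge]
    have : ∑ a, N a a ≤ ∑ a, M₁ a a := hmax (⟨hNS, hNc⟩ : N ∈ S')
    linarith
end
end
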